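/- arXiv:math/0505568 — 2 statements merged into one kernel-verified Lean document; each statement's English description precedes it below -/
import Mathlib

section
/- For every U ∈ ℕ there exists a function g_U : ℂ × (ℂ \ (−∞, −1]) → ℂ, holomorphic in each variable, such that for all s ∈ ℂ and all z ∈ ℂ \ (−∞, −1] one has (1 + z)^s = ∑_{u=0}^{U} (s choose u) z^u + z^{U+1} g_U(s, z), and moreover g_U(k, z) = 0 for every integer k with 0 ≤ k ≤ U and every z ∈ ℂ \ (−∞, −1]. -/
/-!
Take `g_U(s, ·)` to be the `(U+1)`-fold iterated slope at `0` of `f = (1 + ·)^s`. Peeling off one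
slope at a time gives, for any function, `f z = ∑_{u ≤ U} z^u (dslope^[u] f)(0) + z^(U+1)
(dslope^[U+1] f)(z)`, and since `(1 + ·)^s` is the sum of the binomial series at `0`, the values
`(dslope^[u] f)(0)` are its coefficients `(s choose u)`. Iterated slopes of a holomorphic function
are holomorphic (removable singularities), which gives holomorphy in `z`. In `s`, the remainder is
an explicit quotient entire in `s` when `z ≠ 0`, and the polynomial `(s choose U+1)` when `z = 0`.
For `s = k ≤ U` the binomial theorem turns the sum into `(1 + z)^k`, so the remainder vanishes.
-/

open Complex

/-- The slit plane `ℂ \ (-∞, -1]`. -/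
def slitRegion : Set ℂ := {z : ℂ | ¬ (z.im = 0 ∧ z.re ≤ -1)}

/-- Generalized binomial coefficient `s(s-1)⋯(s-u+1)/u!`. -/
noncomputable def genBinom (s : ℂ) (u : ℕ) : ℂ :=
  (∏ i ∈ Finset.range u, (s - (i : ℂ))) / (Nat.factorial u : ℂ)

open Function Topology

section IterateDslope

variable {𝕜 E : Type*} [NontriviallyNormedField 𝕜] [NormedAddCommGroup E] [NormedSpace 𝕜 E]

theorem eq_sum_add_pow_sub_smul_iterate_dslope (f : 𝕜 → E) (a b : 𝕜) (n : ℕ) :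
    f b = ∑ u ∈ Finset.range n, (b - a) ^ u • (swap dslope a)^[u] f a
      + (b - a) ^ n • (swap dslope a)^[n] f b := by
  induction n with
  | zero => simp
  | succ n ih =>
    rw [ih, Finset.sum_range_succ, iterate_succ_apply', swap, pow_succ, mul_smul,
      sub_smul_dslope, smul_sub, add_assoc, add_sub_cancel]

theorem HasFPowerSeriesAt.iterate_dslope_apply_self {f : 𝕜 → E}
    {p : FormalMultilinearSeries 𝕜 𝕜 E} {a : 𝕜} (hp : HasFPowerSeriesAt f p a) (n : ℕ) :
    (swap dslope a)^[n] f a = p.coeff n := by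
  rw [← (hp.has_fpower_series_iterate_dslope_fslope n).coeff_zero 1,
    ← FormalMultilinearSeries.coeff, FormalMultilinearSeries.coeff_iterate_fslope, zero_add]

end IterateDslope

theorem Complex.differentiableOn_iterate_dslope {E : Type*} [NormedAddCommGroup E]
    [NormedSpace ℂ E] [CompleteSpace E] {f : ℂ → E} {s : Set ℂ} {c : ℂ} (hc : s ∈ 𝓝 c)
    (hf : DifferentiableOn ℂ f s) (n : ℕ) :
    DifferentiableOn ℂ ((swap dslope c)^[n] f) s := by
  induction n with
  | zero => exact hf
  | succ n ih => rwa [iterate_succ_apply', swap, differentiableOn_dslope hc]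

theorem mem_slitRegion_iff {z : ℂ} : z ∈ slitRegion ↔ 1 + z ∈ slitPlane := by
  rw [slitRegion, Set.mem_ofPred_eq, mem_slitPlane_iff, add_re, one_re, add_im, one_im, zero_add,
    not_and_or, not_le, or_comm, ← neg_lt_iff_pos_add']

theorem isOpen_slitRegion : IsOpen slitRegion := by
  have : slitRegion = (1 + ·) ⁻¹' slitPlane := Set.ext fun _ => mem_slitRegion_iff
  exact this ▸ isOpen_slitPlane.preimage (continuous_const.add continuous_id)

theorem genBinom_eq_ringChoose (s : ℂ) (u : ℕ) : genBinom s u = Ring.choose s u := by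
  rw [Ring.choose_eq_smul, genBinom, ← Polynomial.aeval_eq_smeval,
    ← descPochhammer_eval_eq_prod_range, Polynomial.aeval_def, ← Polynomial.eval_map,
    descPochhammer_map, smul_eq_mul, inv_mul_eq_div]

theorem differentiable_genBinom (u : ℕ) : Differentiable ℂ (genBinom · u) := by
  unfold genBinom
  fun_prop

noncomputable def binomialRemainder (U : ℕ) (s z : ℂ) : ℂ :=
  (swap dslope 0)^[U + 1] (fun w => (1 + w) ^ s) z

theorem iterate_dslope_one_add_cpow_zero (s : ℂ) (n : ℕ) :
    (swap dslope 0)^[n] (fun w : ℂ => (1 + w) ^ s) 0 = genBinom s n := by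
  rw [one_add_cpow_hasFPowerSeriesAt_zero.iterate_dslope_apply_self, genBinom_eq_ringChoose,
    binomialSeries, FormalMultilinearSeries.coeff_ofScalars]

theorem one_add_cpow_eq_sum_add_binomialRemainder (U : ℕ) (s z : ℂ) :
    (1 + z) ^ s = ∑ u ∈ Finset.range (U + 1), genBinom s u * z ^ u
      + z ^ (U + 1) * binomialRemainder U s z := by
  rw [binomialRemainder]
  simpa only [sub_zero, smul_eq_mul, iterate_dslope_one_add_cpow_zero, mul_comm (z ^ _)] using
    eq_sum_add_pow_sub_smul_iterate_dslope (fun w : ℂ => (1 + w) ^ s) 0 z (U + 1)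

theorem binomialRemainder_zero_right (U : ℕ) (s : ℂ) :
    binomialRemainder U s 0 = genBinom s (U + 1) :=
  iterate_dslope_one_add_cpow_zero s (U + 1)

theorem binomialRemainder_eq_div (U : ℕ) (s : ℂ) {z : ℂ} (hz : z ≠ 0) :
    binomialRemainder U s z
      = ((1 + z) ^ s - ∑ u ∈ Finset.range (U + 1), genBinom s u * z ^ u) / z ^ (U + 1) := by
  rw [eq_div_iff (pow_ne_zero _ hz), one_add_cpow_eq_sum_add_binomialRemainder U s z]
  ring

theorem differentiable_binomialRemainder_left (U : ℕ) {z : ℂ} (hz : 1 + z ≠ 0) :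
    Differentiable ℂ (binomialRemainder U · z) := by
  rcases eq_or_ne z 0 with rfl | hz₀
  · simpa only [binomialRemainder_zero_right] using differentiable_genBinom (U + 1)
  · simp only [binomialRemainder_eq_div U _ hz₀]
    exact ((differentiable_id.const_cpow (.inl hz)).sub
      (Differentiable.fun_sum fun u _ => (differentiable_genBinom u).mul_const _)).div_const _

theorem differentiableOn_binomialRemainder_right (U : ℕ) (s : ℂ) :
    DifferentiableOn ℂ (binomialRemainder U s) slitRegion :=
  Complex.differentiableOn_iterate_dslope
    (isOpen_slitRegion.mem_nhds (by simp [mem_slitRegion_iff]))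
    ((differentiableOn_const 1).add differentiableOn_id |>.cpow_const
      fun _ hw => mem_slitRegion_iff.1 hw) (U + 1)

theorem sum_genBinom_natCast_mul_pow {k n : ℕ} (hk : k < n) (z : ℂ) :
    ∑ u ∈ Finset.range n, genBinom k u * z ^ u = (1 + z) ^ k := by
  have hvanish : ∀ u ∈ Finset.range n, u ∉ Finset.range (k + 1) → genBinom k u * z ^ u = 0 :=
    fun u _ hu => by
      rw [genBinom_eq_ringChoose, Ring.choose_natCast,
        Nat.choose_eq_zero_of_lt (by simpa using hu), Nat.cast_zero, zero_mul]
  rw [← Finset.sum_subset (Finset.range_subset_range.2 hk) hvanish, add_comm, add_pow]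
  simp only [genBinom_eq_ringChoose, Ring.choose_natCast, one_pow, mul_one, mul_comm]

theorem binomialRemainder_natCast {U k : ℕ} (hk : k ≤ U) (z : ℂ) :
    binomialRemainder U k z = 0 := by
  rcases eq_or_ne z 0 with rfl | hz
  · rw [binomialRemainder_zero_right, genBinom_eq_ringChoose, Ring.choose_natCast,
      Nat.choose_eq_zero_of_lt (by omega), Nat.cast_zero]
  · have h := one_add_cpow_eq_sum_add_binomialRemainder U k z
    rw [cpow_natCast, sum_genBinom_natCast_mul_pow (Nat.lt_succ_of_le hk), left_eq_add] at h
    exact (mul_eq_zero.1 h).resolve_left (pow_ne_zero _ hz)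

theorem binomial_remainder (U : ℕ) :
    ∃ g : ℂ → ℂ → ℂ,
      (∀ z ∈ slitRegion, Differentiable ℂ (fun s => g s z)) ∧
      (∀ s : ℂ, DifferentiableOn ℂ (fun z => g s z) slitRegion) ∧
      (∀ (s : ℂ), ∀ z ∈ slitRegion,
        (1 + z) ^ s =
          (∑ u ∈ Finset.range (U + 1), genBinom s u * z ^ u) +
            z ^ (U + 1) * g s z) ∧
      (∀ k : ℕ, k ≤ U → ∀ z ∈ slitRegion, g (k : ℂ) z = 0) :=
  ⟨binomialRemainder U,
    fun _ hz => differentiable_binomialRemainder_left U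
      (slitPlane_ne_zero (mem_slitRegion_iff.1 hz)),
    differentiableOn_binomialRemainder_right U,
    fun s z _ => one_add_cpow_eq_sum_add_binomialRemainder U s z,
    fun _ hk z _ => binomialRemainder_natCast hk z⟩
end

section
/- Let P ∈ ℝ[X_1,…,X_N] be a polynomial of degree at most d all of whose coefficients a_α (for |α| ≤ d) are strictly positive. Then P is hypoelliptic: P(x) > 0 for all x ∈ [1,∞)^N, and for every α ∈ ℕ^N \ {0}, ∂^α P(x)/P(x) → 0 as |x| → ∞ with x ∈ [1,∞)^N. -/
open MvPolynomial Filter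

/-- Iterated partial derivative `∂^α P` for a multi-index `α`. -/
noncomputable def partialDeriv {N : ℕ} (α : Fin N →₀ ℕ) (P : MvPolynomial (Fin N) ℝ) :
    MvPolynomial (Fin N) ℝ :=
  (List.finRange N).foldr (fun n Q => (fun R => MvPolynomial.pderiv n R)^[α n] Q) P

/-- The filter "`|x| → ∞` with `x ∈ [1,∞)^N`". -/
def hypoFilter (N : ℕ) : Filter (Fin N → ℝ) :=
  (Filter.atTop.comap (fun x => ∑ n, x n)) ⊓ Filter.principal {x | ∀ n, 1 ≤ x n}

/-- A polynomial is hypoelliptic if it is positive on `[1,∞)^N` and every strict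
partial derivative is negligible with respect to it at infinity in `[1,∞)^N`. -/
def IsHypoelliptic {N : ℕ} (P : MvPolynomial (Fin N) ℝ) : Prop :=
  (∀ x : Fin N → ℝ, (∀ n, 1 ≤ x n) → 0 < eval x P) ∧
  ∀ α : Fin N →₀ ℕ, α ≠ 0 →
    Tendsto (fun x => eval x (partialDeriv α P) / eval x P) (hypoFilter N) (nhds 0)

lemma finsupp_sum_eq {N : ℕ} (v : Fin N →₀ ℕ) :
    (v.sum fun _ e => e) = ∑ n, v n :=
  Finsupp.sum_fintype _ _ (fun _ => rfl)

lemma td_pderiv_step {N : ℕ} (i : Fin N) (p : MvPolynomial (Fin N) ℝ) :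
    pderiv i p = 0 ∨ (pderiv i p).totalDegree + 1 ≤ p.totalDegree := by
  by_cases h0 : pderiv i p = 0
  · exact Or.inl h0
  right
  have h1 : 1 ≤ p.totalDegree := by
    by_contra h
    push_neg at h
    apply h0
    have hp : ∀ m ∈ p.support, ∀ x, m x = 0 :=
      (totalDegree_eq_zero_iff _ p).1 (by omega)
    conv_lhs => rw [p.as_sum]
    rw [map_sum]
    refine Finset.sum_eq_zero fun v hv => ?_
    have hv0 : v = 0 := Finsupp.ext fun x => hp v hv x
    simp [hv0, pderiv_monomial]
  have h2 : (pderiv i p).totalDegree ≤ p.totalDegree - 1 := by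
    conv_lhs => rw [p.as_sum]
    rw [map_sum]
    refine (totalDegree_finset_sum _ _).trans (Finset.sup_le fun v hv => ?_)
    rw [pderiv_monomial]
    by_cases hvi : v i = 0
    · simp [hvi]
    · refine (totalDegree_monomial_le _ _).trans ?_
      have hv' : ∑ n, v n ≤ p.totalDegree := by
        rw [← finsupp_sum_eq]; exact le_totalDegree hv
      refine le_trans (le_of_eq (finsupp_sum_eq _)) ?_
      have hsub : ∀ n, (v - Finsupp.single i 1 : Fin N →₀ ℕ) n = v n - Finsupp.single i 1 n :=
        fun n => rfl
      have hkey : ∑ n, (v - Finsupp.single i 1 : Fin N →₀ ℕ) n + 1 ≤ ∑ n, v n := by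
        simp_rw [hsub]
        rw [← Finset.add_sum_erase _ _ (Finset.mem_univ i),
          ← Finset.add_sum_erase _ v (Finset.mem_univ i)]
        have he : ∀ n ∈ Finset.univ.erase i, v n - Finsupp.single i 1 n = v n := by
          intro n hn
          have : i ≠ n := fun h => (Finset.mem_erase.1 hn).1 h.symm
          simp [Finsupp.single_apply, this]
        rw [Finset.sum_congr rfl he]
        simp only [Finsupp.single_eq_same]
        have heta : ∑ x ∈ Finset.univ.erase i, v x = (Finset.univ.erase i).sum ⇑v := rfl
        omega
      omega
  omega

lemma td_iter {N : ℕ} (i : Fin N) (k : ℕ) (Q : MvPolynomial (Fin N) ℝ) (D s : ℕ)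
    (h : Q = 0 ∨ Q.totalDegree + s ≤ D) :
    (fun R => pderiv i R)^[k] Q = 0 ∨
      ((fun R => pderiv i R)^[k] Q).totalDegree + (k + s) ≤ D := by
  induction k with
  | zero => simpa using h
  | succ k ih =>
    rw [Function.iterate_succ_apply']
    rcases ih with h0 | hle
    · left; rw [h0]; simp
    · rcases td_pderiv_step i ((fun R => pderiv i R)^[k] Q) with h0 | hstep
      · exact Or.inl h0
      · right; omega

lemma td_fold {N : ℕ} (α : Fin N →₀ ℕ) (P : MvPolynomial (Fin N) ℝ) (l : List (Fin N)) :
    l.foldr (fun n Q => (fun R => pderiv n R)^[α n] Q) P = 0 ∨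
      (l.foldr (fun n Q => (fun R => pderiv n R)^[α n] Q) P).totalDegree
        + (l.map α).sum ≤ P.totalDegree := by
  induction l with
  | nil => right; simp
  | cons n l ih =>
    simp only [List.foldr_cons, List.map_cons, List.sum_cons]
    rcases td_iter n (α n) _ P.totalDegree ((l.map α).sum) ih with h | h
    · exact Or.inl h
    · right; omega

lemma td_partialDeriv {N : ℕ} (α : Fin N →₀ ℕ) (P : MvPolynomial (Fin N) ℝ) :
    partialDeriv α P = 0 ∨
      (partialDeriv α P).totalDegree + ∑ n, α n ≤ P.totalDegree := by
  have := td_fold α P (List.finRange N)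
  rwa [← Fin.sum_univ_def] at this

theorem positive_coeffs_hypoelliptic {N d : ℕ} (P : MvPolynomial (Fin N) ℝ)
    (hdeg : P.totalDegree ≤ d)
    (hpos : ∀ α : Fin N →₀ ℕ, (∑ n, α n) ≤ d → 0 < P.coeff α) :
    IsHypoelliptic P := by
  classical
  have hsupp : ∀ v ∈ P.support, (0:ℝ) < P.coeff v := by
    intro v hv
    refine hpos v ?_
    rw [← finsupp_sum_eq]
    exact (le_totalDegree hv).trans hdeg
  have hmem : ∀ v : Fin N →₀ ℕ, (∑ n, v n) ≤ d → v ∈ P.support :=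
    fun v hv => mem_support_iff.2 (hpos v hv).ne'
  -- positivity
  have hP : ∀ x : Fin N → ℝ, (∀ n, 1 ≤ x n) → 0 < eval x P := by
    intro x hx
    rw [eval_eq']
    refine Finset.sum_pos (fun v hv => ?_) ⟨0, hmem 0 (by simp)⟩
    refine mul_pos (hsupp v hv) (Finset.prod_pos fun i _ => ?_)
    exact pow_pos (lt_of_lt_of_le one_pos (hx i)) _
  refine ⟨hP, ?_⟩
  intro α hα
  obtain ⟨n₀, hn₀⟩ : ∃ n, α n ≠ 0 := by
    by_contra h
    push_neg at h
    exact hα (Finsupp.ext fun n => h n)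
  have hNone : Nonempty (Fin N) := ⟨n₀⟩
  rcases td_partialDeriv α P with hQ0 | hQd
  · rw [hQ0]
    simpa using tendsto_const_nhds
  set Q := partialDeriv α P with hQdef
  -- now Q ≠ 0 case; degree bound
  have hα1 : 1 ≤ ∑ n, α n :=
    le_trans (Nat.one_le_iff_ne_zero.2 hn₀)
      (Finset.single_le_sum (f := fun n => α n) (fun n _ => Nat.zero_le _)
        (Finset.mem_univ n₀))
  have hd1 : 1 ≤ d := by
    have := hQd.trans hdeg
    omega
  have hQdle : Q.totalDegree ≤ d - 1 := by
    have := hQd.trans hdeg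
    omega
  -- constants
  set c : ℝ := Finset.univ.inf' Finset.univ_nonempty
    (fun j => P.coeff (Finsupp.single j d)) with hcdef
  have hsingle_sum : ∀ j : Fin N, (∑ n, Finsupp.single j d n) = d := by
    intro j
    simp [Finsupp.single_apply]
  have hc : 0 < c := by
    rw [hcdef, Finset.lt_inf'_iff]
    intro j _
    exact hpos _ (le_of_eq (hsingle_sum j))
  set C : ℝ := ∑ v ∈ Q.support, |Q.coeff v| with hCdef
  have hC0 : 0 ≤ C := Finset.sum_nonneg fun v _ => abs_nonneg _
  -- lower bound for eval x P
  have hlow : ∀ x : Fin N → ℝ, (∀ n, 1 ≤ x n) → ∀ j, c * x j ^ d ≤ eval x P := by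
    intro x hx j
    have hxpos : ∀ n, (0:ℝ) < x n := fun n => lt_of_lt_of_le one_pos (hx n)
    have hterm : P.coeff (Finsupp.single j d) * x j ^ d ≤ eval x P := by
      rw [eval_eq']
      have hmem' : Finsupp.single j d ∈ P.support := hmem _ (le_of_eq (hsingle_sum j))
      have := Finset.single_le_sum
        (f := fun v => P.coeff v * ∏ i, x i ^ v i)
        (fun v hv => le_of_lt (mul_pos (hsupp v hv)
          (Finset.prod_pos fun i _ => pow_pos (hxpos i) _))) hmem'
      refine le_trans (le_of_eq ?_) this
      congr 1
      rw [Finset.prod_eq_single j (fun i _ hij => by simp [Finsupp.single_apply, Ne.symm hij])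
        (fun h => absurd (Finset.mem_univ j) h)]
      simp
    refine le_trans ?_ hterm
    have : c ≤ P.coeff (Finsupp.single j d) := by
      rw [hcdef]
      exact Finset.inf'_le _ (Finset.mem_univ j)
    exact mul_le_mul_of_nonneg_right this (pow_nonneg (hxpos j).le _)
  -- upper bound for |eval x Q|
  have hup : ∀ x : Fin N → ℝ, (∀ n, 1 ≤ x n) → ∀ j, (∀ i, x i ≤ x j) →
      |eval x Q| ≤ C * x j ^ (d - 1) := by
    intro x hx j hj
    have hxpos : ∀ n, (0:ℝ) ≤ x n := fun n => (lt_of_lt_of_le one_pos (hx n)).le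
    rw [eval_eq']
    refine (Finset.abs_sum_le_sum_abs _ _).trans ?_
    rw [hCdef, Finset.sum_mul]
    refine Finset.sum_le_sum fun v hv => ?_
    rw [abs_mul]
    refine mul_le_mul_of_nonneg_left ?_ (abs_nonneg _)
    have h1 : |∏ i, x i ^ v i| = ∏ i, x i ^ v i := by
      rw [abs_of_nonneg (Finset.prod_nonneg fun i _ => pow_nonneg (hxpos i) _)]
    rw [h1]
    calc ∏ i, x i ^ v i ≤ ∏ i, x j ^ v i := by
          refine Finset.prod_le_prod (fun i _ => pow_nonneg (hxpos i) _)
            (fun i _ => pow_le_pow_left₀ (hxpos i) (hj i) _)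
      _ = x j ^ (∑ i, v i) := by rw [← Finset.prod_pow_eq_pow_sum]
      _ ≤ x j ^ (d - 1) := by
          refine pow_le_pow_right₀ (hx j) ?_
          have : (∑ i, v i) ≤ Q.totalDegree := by
            rw [← finsupp_sum_eq]; exact le_totalDegree hv
          omega
  -- squeeze
  refine squeeze_zero_norm' ?_ ?_ (a := fun x => (C / c) / ((∑ n, x n) / N))
  · refine Filter.eventually_inf_principal.2 (Filter.Eventually.of_forall ?_)
    intro x hx
    have hxpos : ∀ n, (0:ℝ) < x n := fun n => lt_of_lt_of_le one_pos (hx n)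
    obtain ⟨j, hj⟩ := Finite.exists_max fun i => x i
    have hMpos : (0:ℝ) < x j := hxpos j
    have hM1 : (1:ℝ) ≤ x j := hx j
    have hPp : 0 < eval x P := hP x hx
    have hlow' := hlow x hx j
    have hup' := hup x hx j hj
    have hsum_le : (∑ n, x n) ≤ N * x j := by
      calc (∑ n, x n) ≤ ∑ _n : Fin N, x j := Finset.sum_le_sum fun i _ => hj i
        _ = N * x j := by simp [Finset.sum_const, nsmul_eq_mul]
    have hsum_pos : (0:ℝ) < ∑ n, x n := Finset.sum_pos (fun i _ => hxpos i) Finset.univ_nonempty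
    have hNpos : (0:ℝ) < N := by
      exact_mod_cast n₀.pos
    rw [Real.norm_eq_abs, abs_div, abs_of_pos hPp]
    have step1 : |eval x Q| / eval x P ≤ (C * x j ^ (d - 1)) / (c * x j ^ d) := by
      refine div_le_div₀ (by positivity) hup' (by positivity) hlow'
    have step2 : (C * x j ^ (d - 1)) / (c * x j ^ d) = (C / c) / x j := by
      have hpowd : x j ^ d = x j ^ (d - 1) * x j := by
        rw [← pow_succ, Nat.sub_add_cancel hd1]
      rw [hpowd]
      have h1 : x j ^ (d - 1) ≠ 0 := by positivity
      field_simp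
    have step3 : (C / c) / x j ≤ (C / c) / ((∑ n, x n) / N) := by
      refine div_le_div_of_nonneg_left (by positivity) ?_ ?_
      · positivity
      · rw [div_le_iff₀ hNpos]
        linarith [hsum_le]
    calc |eval x Q| / eval x P ≤ (C * x j ^ (d - 1)) / (c * x j ^ d) := step1
      _ = (C / c) / x j := step2
      _ ≤ (C / c) / ((∑ n, x n) / N) := step3
  · have h1 : Tendsto (fun x : Fin N → ℝ => ∑ n, x n) (hypoFilter N) atTop :=
      tendsto_comap.mono_left inf_le_left
    have h2 : Tendsto (fun x : Fin N → ℝ => (∑ n, x n) / N) (hypoFilter N) atTop := by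
      refine h1.atTop_div_const ?_
      exact_mod_cast n₀.pos
    exact Tendsto.div_atTop tendsto_const_nhds h2
end
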